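/- arXiv:1708.00191 — 3 statements merged into one kernel-verified Lean document; each statement's English description precedes it below -/
import Mathlib

section
/- Let T : [0,1] → [0,1] be piecewise C² expanding with contraction bound λ ∈ (0,1), let γ ∈ [0,1) satisfy γ < 1 − λ, and fix an integer p ≥ 1. For each n ≥ 2 let T̂ be the globally coupled map on [0,1]^n built from T with coupling γ, and let z_n ∈ [0,1]^n be a periodic point of T̂ of period p such that every coordinate of every orbit point z_n, T̂(z_n), …, T̂^{p−1}(z_n) lies in the interior of one of the partition intervals of T (so that T̂^p is differentiable at z_n). Then the extremal index θ_n(z_n) := 1 − |det D(T̂^p)(z_n)|^{−1} satisfies lim_{n→∞} θ_n(z_n) = 1. -/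
/-!
The globally coupled map factors as `T̂ = C ∘ (T × ⋯ × T)` with the coupling matrix
`C = (1-γ)·I + (γ/n)·J`, a rank-one perturbation of a scalar matrix, so `det C = (1-γ)^(n-1)` by
the matrix determinant lemma. By the chain rule along the orbit,
`|det D(T̂^p)(z)| ≥ ((1-γ)^(n-1) λ^(-n))^p`, whose inverse `((1-γ)·(λ/(1-γ))^n)^p` tends to `0`
as `n → ∞` because `λ < 1 - γ`.
-/

open MeasureTheory Set Filter

/-- The globally coupled map `T̂` on `[0,1]^n` built from a local map `T` with
coupling strength `γ`: `T̂(x)_i = (1-γ)·T(x_i) + (γ/n)·∑_j T(x_j)`. -/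
noncomputable def coupledMap (n : ℕ) (γ : ℝ) (T : ℝ → ℝ) :
    (Fin n → ℝ) → (Fin n → ℝ) :=
  fun x i => (1 - γ) * T (x i) + (γ / n) * ∑ j, T (x j)

/-- The unit cube `[0,1]^n`. -/
def unitCube (n : ℕ) : Set (Fin n → ℝ) := {x | ∀ i, x i ∈ Icc (0:ℝ) 1}

/-- `T : [0,1] → [0,1]` is piecewise `C²` expanding with contraction bound `lam`,
with partition points `a 0 = 0 < a 1 < ⋯ < a q = 1`: on the interior of each
partition interval `T` is injective, coincides with a `C²` function (hence is `C²`
extendable with continuity, together with its derivatives, to the closure), and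
satisfies `|T'| ≥ 1/lam`. -/
def PiecewiseC2Expanding (T : ℝ → ℝ) (lam : ℝ) (q : ℕ) (a : ℕ → ℝ) : Prop :=
  1 ≤ q ∧ a 0 = 0 ∧ a q = 1 ∧ (∀ l < q, a l < a (l + 1)) ∧
  (∀ l < q, Set.InjOn T (Ioo (a l) (a (l + 1)))) ∧
  (∀ l < q, ∃ g : ℝ → ℝ, ContDiff ℝ 2 g ∧ Set.EqOn T g (Ioo (a l) (a (l + 1)))) ∧
  (∀ l < q, ∀ x ∈ Ioo (a l) (a (l + 1)), 1 / lam ≤ |deriv T x|)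

theorem ContinuousLinearMap.det_comp {R M : Type*} [CommRing R] [TopologicalSpace M]
    [AddCommGroup M] [Module R M] (h f : M →L[R] M) : (h.comp f).det = h.det * f.det := by
  rw [det, toLinearMap_comp, LinearMap.det_comp]

theorem det_pi_smul_proj {ι : Type*} [Fintype ι] (d : ι → ℝ) :
    (ContinuousLinearMap.pi fun i =>
      d i • ContinuousLinearMap.proj (R := ℝ) (φ := fun _ : ι => ℝ) i).det = ∏ i, d i := by
  have h := ContinuousLinearMap.det_pi fun i => ContinuousLinearMap.toSpanSingleton ℝ (d i)
  simp only [ContinuousLinearMap.det_toSpanSingleton] at h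
  rw [← h]
  congr 2
  ext x i
  simp [mul_comm]

theorem hasFDerivAt_piMap {ι : Type*} [Fintype ι] {T : ℝ → ℝ} {x d : ι → ℝ}
    (hd : ∀ i, HasDerivAt T (d i) (x i)) :
    HasFDerivAt (fun y i => T (y i))
      (ContinuousLinearMap.pi fun i =>
        d i • ContinuousLinearMap.proj (R := ℝ) (φ := fun _ : ι => ℝ) i) x :=
  hasFDerivAt_pi.2 fun i => (hd i).comp_hasFDerivAt x (hasFDerivAt_apply i x)

section Iterate

variable {𝕜 E : Type*} [NontriviallyNormedField 𝕜] [NormedAddCommGroup E] [NormedSpace 𝕜 E]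
  {f : E → E} {x : E}

theorem differentiableAt_iterate {p : ℕ} (hf : ∀ t < p, DifferentiableAt 𝕜 f (f^[t] x)) :
    DifferentiableAt 𝕜 f^[p] x := by
  induction p with
  | zero => exact differentiableAt_id
  | succ p ih =>
    rw [Function.iterate_succ']
    exact (hf p p.lt_succ_self).comp x (ih fun t ht => hf t (ht.trans p.lt_succ_self))

theorem det_fderiv_iterate {p : ℕ} (hf : ∀ t < p, DifferentiableAt 𝕜 f (f^[t] x)) :
    (fderiv 𝕜 f^[p] x).det = ∏ t ∈ Finset.range p, (fderiv 𝕜 f (f^[t] x)).det := by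
  induction p with
  | zero => simp [ContinuousLinearMap.det, ContinuousLinearMap.coe_id]
  | succ p ih =>
    have hf' : ∀ t < p, DifferentiableAt 𝕜 f (f^[t] x) := fun t ht =>
      hf t (ht.trans p.lt_succ_self)
    rw [Function.iterate_succ', fderiv_comp x (hf p p.lt_succ_self) (differentiableAt_iterate hf'),
      ContinuousLinearMap.det_comp, Finset.prod_range_succ, ih hf', mul_comm]

end Iterate

section CouplingMatrix

open Matrix

noncomputable def couplingMatrix (n : ℕ) (γ : ℝ) : Matrix (Fin n) (Fin n) ℝ :=
  (1 - γ) • 1 + (γ / n) • of fun _ _ => 1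

theorem coupledMap_eq_mulVec (n : ℕ) (γ : ℝ) (T : ℝ → ℝ) (x : Fin n → ℝ) :
    coupledMap n γ T x = couplingMatrix n γ *ᵥ fun i => T (x i) := by
  ext i
  simp [coupledMap, couplingMatrix, add_mul, Finset.sum_add_distrib, one_apply, mulVec,
    dotProduct, Finset.mul_sum]

theorem det_couplingMatrix {n : ℕ} (hn : n ≠ 0) {γ : ℝ} (hγ : γ ≠ 1) :
    (couplingMatrix n γ).det = (1 - γ) ^ (n - 1) := by
  have h1γ : 1 - γ ≠ 0 := sub_ne_zero.2 hγ.symm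
  have hunit : IsUnit ((1 - γ) • (1 : Matrix (Fin n) (Fin n) ℝ)).det := by simp [h1γ]
  have hinv : ((1 - γ) • (1 : Matrix (Fin n) (Fin n) ℝ))⁻¹ = (1 - γ)⁻¹ • 1 := by
    rw [inv_eq_left_inv]
    simp [smul_smul, h1γ]
  have hrank_one : (γ / n) • of (fun _ _ => 1) =
      replicateCol Unit (fun _ : Fin n => γ / n) *
        replicateRow Unit (fun _ : Fin n => (1 : ℝ)) := by
    ext
    simp [mul_apply]
  rw [couplingMatrix, hrank_one, det_add_replicateCol_mul_replicateRow hunit, hinv]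
  simp only [det_smul_of_tower, Fintype.card_fin, det_one, smul_eq_mul, mul_one, Matrix.mul_smul,
    Matrix.mul_one, smul_mul, det_unique, PUnit.default_eq_unit, Matrix.add_apply, one_apply_eq,
    Matrix.smul_apply, mul_apply, replicateRow_apply, replicateCol_apply, one_mul,
    Finset.sum_const, Finset.card_univ, nsmul_eq_mul]
  obtain ⟨m, rfl⟩ := Nat.exists_eq_add_one_of_ne_zero hn
  rw [Nat.add_sub_cancel, pow_succ]
  field_simp
  ring

noncomputable def coupledMapDeriv (n : ℕ) (γ : ℝ) (d : Fin n → ℝ) :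
    (Fin n → ℝ) →L[ℝ] (Fin n → ℝ) :=
  (LinearMap.toContinuousLinearMap (toLin' (couplingMatrix n γ))).comp
    (ContinuousLinearMap.pi fun i => d i • ContinuousLinearMap.proj i)

theorem hasFDerivAt_coupledMap {n : ℕ} {γ : ℝ} {T : ℝ → ℝ} {x d : Fin n → ℝ}
    (hd : ∀ i, HasDerivAt T (d i) (x i)) :
    HasFDerivAt (coupledMap n γ T) (coupledMapDeriv n γ d) x := by
  have h : coupledMap n γ T = toLin' (couplingMatrix n γ) ∘ fun y i => T (y i) :=
    funext (coupledMap_eq_mulVec n γ T)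
  rw [h]
  exact (LinearMap.toContinuousLinearMap _).hasFDerivAt.comp x (hasFDerivAt_piMap hd)

theorem det_coupledMapDeriv {n : ℕ} (hn : n ≠ 0) {γ : ℝ} (hγ : γ ≠ 1) (d : Fin n → ℝ) :
    (coupledMapDeriv n γ d).det = (1 - γ) ^ (n - 1) * ∏ i, d i := by
  rw [coupledMapDeriv, ContinuousLinearMap.det_comp, det_pi_smul_proj, ContinuousLinearMap.det,
    LinearMap.coe_toContinuousLinearMap, LinearMap.det_toLin', det_couplingMatrix hn hγ]

end CouplingMatrix

namespace PiecewiseC2Expanding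

variable {T : ℝ → ℝ} {lam : ℝ} {q : ℕ} {a : ℕ → ℝ}

theorem hasDerivAt (h : PiecewiseC2Expanding T lam q a) {y : ℝ}
    (hy : ∃ l < q, y ∈ Ioo (a l) (a (l + 1))) : HasDerivAt T (deriv T y) y := by
  obtain ⟨l, hl, hyl⟩ := hy
  obtain ⟨-, -, -, -, -, hC2, -⟩ := h
  obtain ⟨g, hg, hTg⟩ := hC2 l hl
  have hTg' : T =ᶠ[nhds y] g := Filter.eventuallyEq_of_mem (isOpen_Ioo.mem_nhds hyl) hTg
  rw [hTg'.deriv_eq]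
  exact ((hg.differentiable (by norm_num)).differentiableAt.hasDerivAt).congr_of_eventuallyEq hTg'

theorem le_abs_deriv (h : PiecewiseC2Expanding T lam q a) {y : ℝ}
    (hy : ∃ l < q, y ∈ Ioo (a l) (a (l + 1))) : 1 / lam ≤ |deriv T y| := by
  obtain ⟨l, hl, hyl⟩ := hy
  obtain ⟨-, -, -, -, -, -, hexp⟩ := h
  exact hexp l hl y hyl

variable {n : ℕ} {γ : ℝ}

theorem le_abs_det_fderiv_coupledMap (h : PiecewiseC2Expanding T lam q a) (hlam : 0 < lam)
    (hn : n ≠ 0) (hγ : γ ≠ 1) {x : Fin n → ℝ} (hx : ∀ i, ∃ l < q, x i ∈ Ioo (a l) (a (l + 1))) :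
    |1 - γ| ^ (n - 1) / lam ^ n ≤ |(fderiv ℝ (coupledMap n γ T) x).det| := by
  rw [(hasFDerivAt_coupledMap fun i => h.hasDerivAt (hx i)).fderiv, det_coupledMapDeriv hn hγ,
    abs_mul, abs_pow, Finset.abs_prod, div_eq_mul_one_div, ← _root_.one_div_pow]
  gcongr
  calc (1 / lam) ^ n = ∏ _i : Fin n, 1 / lam := by simp
    _ ≤ ∏ i, |deriv T (x i)| :=
      Finset.prod_le_prod (fun _ _ => by positivity) fun i _ => h.le_abs_deriv (hx i)

theorem pow_le_abs_det_fderiv_iterate_coupledMap (h : PiecewiseC2Expanding T lam q a)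
    (hlam : 0 < lam) (hn : n ≠ 0) (hγ : γ ≠ 1) {z : Fin n → ℝ} {p : ℕ}
    (hz : ∀ t < p, ∀ i, ∃ l < q, ((coupledMap n γ T)^[t] z) i ∈ Ioo (a l) (a (l + 1))) :
    (|1 - γ| ^ (n - 1) / lam ^ n) ^ p ≤ |(fderiv ℝ (coupledMap n γ T)^[p] z).det| := by
  have hdiff : ∀ t < p, DifferentiableAt ℝ (coupledMap n γ T) ((coupledMap n γ T)^[t] z) :=
    fun t ht => (hasFDerivAt_coupledMap fun i => h.hasDerivAt (hz t ht i)).differentiableAt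
  rw [det_fderiv_iterate hdiff, Finset.abs_prod]
  calc (|1 - γ| ^ (n - 1) / lam ^ n) ^ p
      = ∏ _t ∈ Finset.range p, |1 - γ| ^ (n - 1) / lam ^ n := by
        rw [Finset.prod_const, Finset.card_range]
    _ ≤ _ := Finset.prod_le_prod (fun _ _ => by positivity) fun t ht =>
        h.le_abs_det_fderiv_coupledMap hlam hn hγ (hz t (Finset.mem_range.1 ht))

theorem inv_abs_det_fderiv_iterate_coupledMap_le (h : PiecewiseC2Expanding T lam q a)
    (hlam : 0 < lam) (hn : n ≠ 0) (hγ : γ ≠ 1) {z : Fin n → ℝ} {p : ℕ}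
    (hz : ∀ t < p, ∀ i, ∃ l < q, ((coupledMap n γ T)^[t] z) i ∈ Ioo (a l) (a (l + 1))) :
    |(fderiv ℝ (coupledMap n γ T)^[p] z).det|⁻¹ ≤ (|1 - γ| * (lam / |1 - γ|) ^ n) ^ p := by
  have h1γ : |1 - γ| ≠ 0 := abs_ne_zero.2 (sub_ne_zero.2 hγ.symm)
  have hc : 0 < |1 - γ| ^ (n - 1) / lam ^ n := by positivity
  calc |(fderiv ℝ (coupledMap n γ T)^[p] z).det|⁻¹
      ≤ ((|1 - γ| ^ (n - 1) / lam ^ n) ^ p)⁻¹ :=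
        inv_anti₀ (pow_pos hc p) (h.pow_le_abs_det_fderiv_iterate_coupledMap hlam hn hγ hz)
    _ = (|1 - γ| * (lam / |1 - γ|) ^ n) ^ p := by
      obtain ⟨m, rfl⟩ := Nat.exists_eq_add_one_of_ne_zero hn
      rw [← inv_pow, Nat.add_sub_cancel, div_pow, pow_succ, pow_succ]
      field_simp

end PiecewiseC2Expanding

theorem extremal_index_tendsto_one_general
    (T : ℝ → ℝ) (lam γ : ℝ) (p : ℕ)
    (hlam : lam ∈ Ioo (0:ℝ) 1) (hγlam : γ < 1 - lam)
    (hp : 1 ≤ p)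
    (q : ℕ) (a : ℕ → ℝ) (hpw : PiecewiseC2Expanding T lam q a)
    (z : (n : ℕ) → (Fin n → ℝ))
    (hz_int : ∀ n, 2 ≤ n → ∀ t < p, ∀ i : Fin n,
      ∃ l < q, ((coupledMap n γ T)^[t] (z n)) i ∈ Ioo (a l) (a (l + 1))) :
    Filter.Tendsto
      (fun n : ℕ => 1 - |(fderiv ℝ ((coupledMap n γ T)^[p]) (z n)).det|⁻¹)
      Filter.atTop (nhds 1) := by
  obtain ⟨hlam0, -⟩ := hlam
  have h1γ : 0 < 1 - γ := by linarith
  have hρ0 : 0 ≤ lam / |1 - γ| := by positivity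
  have hρ1 : lam / |1 - γ| < 1 := by
    rw [abs_of_pos h1γ, div_lt_one h1γ]
    linarith
  have hbound : ∀ᶠ n in atTop, |(fderiv ℝ ((coupledMap n γ T)^[p]) (z n)).det|⁻¹ ≤
      (|1 - γ| * (lam / |1 - γ|) ^ n) ^ p := by
    filter_upwards [eventually_ge_atTop 2] with n hn
    exact hpw.inv_abs_det_fderiv_iterate_coupledMap_le hlam0 (by omega) (sub_pos.1 h1γ).ne
      (hz_int n hn)
  have hlim : Tendsto (fun n : ℕ => (|1 - γ| * (lam / |1 - γ|) ^ n) ^ p) atTop (nhds 0) := by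
    simpa [zero_pow (by omega : p ≠ 0)] using
      ((tendsto_pow_atTop_nhds_zero_of_lt_one hρ0 hρ1).const_mul |1 - γ|).pow p
  simpa using
    tendsto_const_nhds.sub (squeeze_zero' (.of_forall fun _ => by positivity) hbound hlim)

/-- for a fixed local piecewise `C²` expanding map `T` with contraction
bound `lam`, a coupling `γ ∈ [0,1)` with `γ < 1 - lam`, and a fixed period `p ≥ 1`,
if for each `n ≥ 2` the point `z n ∈ [0,1]^n` is a periodic point of period `p` of the
globally coupled map whose whole orbit has all coordinates in the interiors of the
partition intervals of `T`, then the extremal index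
`θ_n(z_n) = 1 - |det D(T̂^p)(z_n)|⁻¹` tends to `1` as `n → ∞`. -/
theorem extremal_index_tendsto_one
    (T : ℝ → ℝ) (lam γ : ℝ) (p : ℕ)
    (hlam : lam ∈ Ioo (0:ℝ) 1) (hγ0 : 0 ≤ γ) (hγ1 : γ < 1) (hγlam : γ < 1 - lam)
    (hp : 1 ≤ p)
    (hT : Set.MapsTo T (Icc 0 1) (Icc 0 1))
    (q : ℕ) (a : ℕ → ℝ) (hpw : PiecewiseC2Expanding T lam q a)
    (z : (n : ℕ) → (Fin n → ℝ))
    (hz_mem : ∀ n, 2 ≤ n → z n ∈ unitCube n)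
    (hz_per : ∀ n, 2 ≤ n → (coupledMap n γ T)^[p] (z n) = z n)
    (hz_int : ∀ n, 2 ≤ n → ∀ t < p, ∀ i : Fin n,
      ∃ l < q, ((coupledMap n γ T)^[t] (z n)) i ∈ Ioo (a l) (a (l + 1))) :
    Filter.Tendsto
      (fun n : ℕ => 1 - |(fderiv ℝ ((coupledMap n γ T)^[p]) (z n)).det|⁻¹)
      Filter.atTop (nhds 1) :=
  extremal_index_tendsto_one_general T lam γ p hlam hγlam hp q a hpw z hz_int
end

section
/- Let n ≥ 2, λ ∈ (0,1), and γ ∈ [0,1) with λ < 1 − γ. Let T : [0,1] → [0,1] be piecewise C² expanding with contraction bound λ, and let T̂ be the globally coupled map on [0,1]^n built from T with coupling γ. Let h : [0,1]^n → [0,∞) be a bounded Borel function whose essential infimum h_inf (with respect to Lebesgue measure) is strictly positive, with essential supremum ‖h‖_∞, and let μ be the Borel measure on [0,1]^n with density h with respect to Lebesgue measure. Then limsup_{ν→0⁺} μ(S_ν ∩ T̂^{−1}(S_ν)) / μ(S_ν) ≤ λ^{n−1}·‖h‖_∞ / ((1−γ)^{n−1}·h_inf). -/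
/-! Off the partition points of `T`, a point of `S_ν ∩ T̂⁻¹ S_ν` has all its coordinates in one
branch of `T`; there `T̂(x)_i - T̂(x)_j = (1 - γ)(T x_i - T x_j)` and `|T'| ≥ 1/λ`, so the point
lies in `S_{λν/(1-γ)}`. Points within `ν` of a partition point have volume `O(ν^n)`. Slicing
along the smallest coordinate, `n (1 - ν) ν^(n-1) ≤ vol S_ν ≤ n ν^(n-1)`, and `μ` lies between
`h_inf · vol` and `‖h‖_∞ · vol`, so the ratio is at most
`‖h‖_∞ (n (λν/(1-γ))^(n-1) + O(ν^n)) / (h_inf n (1 - ν) ν^(n-1))`, which tends to the bound. -/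

open MeasureTheory Set Filter

/-- The synchronization neighborhood `S_ν = {x ∈ [0,1]^n : |x_i − x_j| ≤ ν ∀ i ≠ j}`. -/
def syncSet (n : ℕ) (ν : ℝ) : Set (Fin n → ℝ) :=
  {x ∈ unitCube n | ∀ i j, i ≠ j → |x i - x j| ≤ ν}

/-- The Borel measure on `[0,1]^n` with density `h` with respect to Lebesgue measure. -/
noncomputable def densityMeasure (n : ℕ) (h : (Fin n → ℝ) → ℝ) : Measure (Fin n → ℝ) :=
  (volume.restrict (unitCube n)).withDensity fun x => ENNReal.ofReal (h x)

open scoped ENNReal Topology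

section Slab

variable {α : Type*}

def slab (m : ℕ) (i : Fin (m + 1)) (I : Set α) (S : α → Set α) : Set (Fin (m + 1) → α) :=
  {x | x i ∈ I ∧ ∀ j, j ≠ i → x j ∈ S (x i)}

lemma pairwise_disjoint_slab [LinearOrder α] (m : ℕ) (I : Set α) {S : α → Set α}
    (hS : ∀ t, S t ⊆ Ioi t) : Pairwise (Function.onFun Disjoint fun i => slab m i I S) := by
  intro i j hij
  refine Set.disjoint_left.2 fun x hxi hxj => ?_
  have hij' : x i < x j := hS _ (hxi.2 j (Ne.symm hij))
  have hji' : x j < x i := hS _ (hxj.2 i hij)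
  exact lt_asymm hij' hji'

lemma slab_eq_preimage [MeasurableSpace α] (m : ℕ) (i : Fin (m + 1)) (I : Set α) (S : α → Set α) :
    slab m i I S = MeasurableEquiv.piFinSuccAbove (fun _ => α) i ⁻¹'
      {p : α × (Fin m → α) | p.1 ∈ I ∧ ∀ j, p.2 j ∈ S p.1} := by
  ext x
  simp only [slab, mem_preimage, MeasurableEquiv.piFinSuccAbove_apply, Fin.insertNthEquiv,
    Equiv.coe_fn_symm_mk]
  refine and_congr_right fun _ => ⟨fun h j => h _ (Fin.succAbove_ne i j), fun h j hj => ?_⟩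
  obtain ⟨k, rfl⟩ := Fin.exists_succAbove_eq hj
  exact h k

lemma measurableSet_fst_mem_and_forall_snd_mem [MeasurableSpace α] {m : ℕ} {I : Set α}
    (hI : MeasurableSet I) {S : α → Set α} (hS : MeasurableSet {q : α × α | q.2 ∈ S q.1}) :
    MeasurableSet {p : α × (Fin m → α) | p.1 ∈ I ∧ ∀ j, p.2 j ∈ S p.1} := by
  have hj (j : Fin m) : MeasurableSet {p : α × (Fin m → α) | p.2 j ∈ S p.1} :=
    hS.preimage (measurable_fst.prodMk ((measurable_pi_apply j).comp measurable_snd))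
  simp only [ofPred_and, ofPred_forall]
  exact (measurable_fst hI).inter (MeasurableSet.iInter hj)

lemma measurableSet_slab [MeasurableSpace α] (m : ℕ) (i : Fin (m + 1)) {I : Set α}
    (hI : MeasurableSet I) {S : α → Set α} (hS : MeasurableSet {q : α × α | q.2 ∈ S q.1}) :
    MeasurableSet (slab m i I S) := by
  rw [slab_eq_preimage]
  exact (MeasurableEquiv.measurable _) (measurableSet_fst_mem_and_forall_snd_mem hI hS)

lemma volume_slab [MeasureSpace α] [SigmaFinite (volume : Measure α)] (m : ℕ) (i : Fin (m + 1))
    {I : Set α} (hI : MeasurableSet I) {S : α → Set α}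
    (hS : MeasurableSet {q : α × α | q.2 ∈ S q.1}) {V : ℝ≥0∞} (hV : ∀ t, volume (S t) = V) :
    volume (slab m i I S) = volume I * V ^ m := by
  have hP := measurableSet_fst_mem_and_forall_snd_mem (m := m) hI hS
  have hfibre (t : α) : volume (Prod.mk t ⁻¹'
      {p : α × (Fin m → α) | p.1 ∈ I ∧ ∀ j, p.2 j ∈ S p.1}) = I.indicator (fun _ => V ^ m) t := by
    by_cases ht : t ∈ I
    · have : Prod.mk t ⁻¹' {p : α × (Fin m → α) | p.1 ∈ I ∧ ∀ j, p.2 j ∈ S p.1} =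
          Set.pi univ fun _ => S t := by
        ext y; simp [ht, Set.mem_pi]
      simp [this, volume_pi_pi, hV, indicator_of_mem ht]
    · simp [ht]
  rw [slab_eq_preimage, (volume_preserving_piFinSuccAbove (fun _ => α) i).measure_preimage
    hP.nullMeasurableSet, Measure.volume_eq_prod, Measure.prod_apply hP]
  simp only [hfibre, lintegral_indicator hI, setLIntegral_const, mul_comm]

end Slab

lemma measurableSet_snd_mem_Icc {f g : ℝ → ℝ} (hf : Measurable f) (hg : Measurable g) :
    MeasurableSet {q : ℝ × ℝ | q.2 ∈ Icc (f q.1) (g q.1)} :=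
  (measurableSet_le (hf.comp measurable_fst) measurable_snd).inter
    (measurableSet_le measurable_snd (hg.comp measurable_fst))

lemma measurableSet_snd_mem_Ioc {f g : ℝ → ℝ} (hf : Measurable f) (hg : Measurable g) :
    MeasurableSet {q : ℝ × ℝ | q.2 ∈ Ioc (f q.1) (g q.1)} :=
  (measurableSet_lt (hf.comp measurable_fst) measurable_snd).inter
    (measurableSet_le measurable_snd (hg.comp measurable_fst))

lemma unitCube_eq_pi (n : ℕ) : unitCube n = Set.pi univ fun _ => Icc (0 : ℝ) 1 := by
  ext x; simp [unitCube, Pi.le_def, forall_and]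

lemma measurableSet_unitCube (n : ℕ) : MeasurableSet (unitCube n) := by
  rw [unitCube_eq_pi]
  exact MeasurableSet.univ_pi fun _ => measurableSet_Icc

lemma volume_unitCube (n : ℕ) : volume (unitCube n) = 1 := by
  rw [unitCube_eq_pi, volume_pi_pi]
  simp

lemma abs_sub_le_of_mem_syncSet {n : ℕ} {ν : ℝ} {x : Fin n → ℝ} (hx : x ∈ syncSet n ν)
    (hν : 0 ≤ ν) (i j : Fin n) : |x i - x j| ≤ ν := by
  rcases eq_or_ne i j with rfl | hij
  · simpa using hν
  · exact hx.2 i j hij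

lemma syncSet_subset_iUnion_slab (m : ℕ) (ν : ℝ) :
    syncSet (m + 1) ν ⊆ ⋃ i, slab m i (Icc 0 1) fun t => Icc t (t + ν) := by
  intro x hx
  obtain ⟨i, -, hi⟩ := Finset.exists_min_image Finset.univ x Finset.univ_nonempty
  refine mem_iUnion.2 ⟨i, hx.1 i, fun j hj => ⟨hi j (Finset.mem_univ j), ?_⟩⟩
  linarith [(abs_le.1 (hx.2 j i hj)).2]

lemma slab_subset_syncSet (m : ℕ) {ν : ℝ} (hν : 0 ≤ ν) (i : Fin (m + 1)) :
    slab m i (Icc 0 (1 - ν)) (fun t => Ioc t (t + ν)) ⊆ syncSet (m + 1) ν := by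
  rintro x ⟨hi, hj⟩
  have hx (j : Fin (m + 1)) : x i ≤ x j ∧ x j ≤ x i + ν := by
    rcases eq_or_ne j i with rfl | hji
    · constructor <;> linarith
    · exact ⟨(hj j hji).1.le, (hj j hji).2⟩
  refine ⟨fun j => ⟨by linarith [hx j, hi.1], by linarith [hx j, hi.2]⟩, fun j k _ => ?_⟩
  rw [abs_le]
  constructor <;> linarith [hx j, hx k]

lemma volume_syncSet_le (m : ℕ) {ν : ℝ} (hν : 0 ≤ ν) :
    volume (syncSet (m + 1) ν) ≤ ENNReal.ofReal ((m + 1) * ν ^ m) := by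
  have hslab (i : Fin (m + 1)) :
      volume (slab m i (Icc 0 1) fun t => Icc t (t + ν)) = ENNReal.ofReal ν ^ m := by
    rw [volume_slab m i measurableSet_Icc (measurableSet_snd_mem_Icc measurable_id
      (measurable_add_const ν)) (fun t => by rw [Real.volume_Icc, add_sub_cancel_left])]
    simp
  calc volume (syncSet (m + 1) ν)
      ≤ ∑ i, volume (slab m i (Icc 0 1) fun t => Icc t (t + ν)) :=
        (measure_mono (syncSet_subset_iUnion_slab m ν)).trans (measure_iUnion_fintype_le _ _)
    _ = ENNReal.ofReal ((m + 1) * ν ^ m) := by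
        rw [ENNReal.ofReal_mul (by positivity), ENNReal.ofReal_pow hν]
        simp only [hslab, Finset.sum_const, Finset.card_univ, Fintype.card_fin, nsmul_eq_mul]
        norm_cast

lemma ofReal_le_volume_syncSet (m : ℕ) {ν : ℝ} (hν : 0 ≤ ν) :
    ENNReal.ofReal ((m + 1) * ν ^ m * (1 - ν)) ≤ volume (syncSet (m + 1) ν) := by
  have hslab (i : Fin (m + 1)) : volume (slab m i (Icc 0 (1 - ν)) fun t => Ioc t (t + ν)) =
      ENNReal.ofReal (1 - ν) * ENNReal.ofReal ν ^ m := by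
    rw [volume_slab m i measurableSet_Icc (measurableSet_snd_mem_Ioc measurable_id
      (measurable_add_const ν)) (fun t => by rw [Real.volume_Ioc, add_sub_cancel_left]),
      Real.volume_Icc, sub_zero]
  calc ENNReal.ofReal ((m + 1) * ν ^ m * (1 - ν))
      = ∑ i, volume (slab m i (Icc 0 (1 - ν)) fun t => Ioc t (t + ν)) := by
        rw [ENNReal.ofReal_mul (by positivity), ENNReal.ofReal_mul (by positivity),
          ENNReal.ofReal_pow hν]
        simp only [hslab, Finset.sum_const, Finset.card_univ, Fintype.card_fin, nsmul_eq_mul]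
        norm_cast
        ring
    _ = volume (⋃ i, slab m i (Icc 0 (1 - ν)) fun t => Ioc t (t + ν)) := by
        rw [measure_iUnion (pairwise_disjoint_slab m _ fun t => Ioc_subset_Ioi_self)
          fun i => measurableSet_slab m i measurableSet_Icc
            (measurableSet_snd_mem_Ioc measurable_id (measurable_add_const ν)), tsum_fintype]
    _ ≤ volume (syncSet (m + 1) ν) := measure_mono (iUnion_subset (slab_subset_syncSet m hν))

lemma volume_syncSet_inter_abs_sub_le (m : ℕ) (i : Fin (m + 1)) (b : ℝ) {ν : ℝ} (hν : 0 ≤ ν) :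
    volume {x ∈ syncSet (m + 1) ν | |x i - b| ≤ ν} ≤ ENNReal.ofReal ((2 * ν) ^ (m + 1)) := by
  have hsub : {x ∈ syncSet (m + 1) ν | |x i - b| ≤ ν} ⊆
      slab m i (Icc (b - ν) (b + ν)) fun t => Icc (t - ν) (t + ν) := by
    rintro x ⟨hx, hxb⟩
    refine ⟨?_, fun j _ => ?_⟩
    · rw [mem_Icc]; constructor <;> linarith [abs_le.1 hxb]
    · have := abs_le.1 (abs_sub_le_of_mem_syncSet hx hν j i)
      rw [mem_Icc]; constructor <;> linarith
  have h2ν (t : ℝ) : volume (Icc (t - ν) (t + ν)) = ENNReal.ofReal (2 * ν) := by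
    rw [Real.volume_Icc]; ring_nf
  calc volume {x ∈ syncSet (m + 1) ν | |x i - b| ≤ ν}
      ≤ volume (slab m i (Icc (b - ν) (b + ν)) fun t => Icc (t - ν) (t + ν)) := measure_mono hsub
    _ = ENNReal.ofReal ((2 * ν) ^ (m + 1)) := by
        rw [volume_slab m i measurableSet_Icc (measurableSet_snd_mem_Icc (measurable_sub_const ν)
          (measurable_add_const ν)) h2ν, h2ν, ENNReal.ofReal_pow (by positivity), pow_succ']

lemma Set.OrdConnected.mul_abs_sub_le_abs_sub_of_le_abs_deriv {f : ℝ → ℝ} {s : Set ℝ}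
    (hs : s.OrdConnected) (hf : DifferentiableOn ℝ f s) {c : ℝ}
    (hder : ∀ x ∈ s, c ≤ |deriv f x|) {u v : ℝ} (hu : u ∈ s) (hv : v ∈ s) :
    c * |u - v| ≤ |f u - f v| := by
  wlog huv : u < v generalizing u v
  · rcases (not_lt.1 huv).eq_or_lt with rfl | hvu
    · simp
    · rw [abs_sub_comm u, abs_sub_comm (f u)]
      exact this hv hu hvu
  have hIcc := hs.out hu hv
  obtain ⟨w, hw, hslope⟩ := exists_deriv_eq_slope f huv (hf.continuousOn.mono hIcc)
    (hf.mono (Ioo_subset_Icc_self.trans hIcc))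
  have hvu : 0 < v - u := sub_pos.2 huv
  calc c * |u - v| = c * (v - u) := by rw [abs_sub_comm, abs_of_pos hvu]
    _ ≤ |deriv f w| * (v - u) := by gcongr; exact hder w (hIcc (Ioo_subset_Icc_self hw))
    _ = |f u - f v| := by
        rw [hslope, abs_div, abs_of_pos hvu, div_mul_cancel₀ _ hvu.ne', abs_sub_comm]

lemma PiecewiseC2Expanding.abs_sub_le {T : ℝ → ℝ} {lam : ℝ} {q : ℕ} {a : ℕ → ℝ}
    (hT : PiecewiseC2Expanding T lam q a) (hlam : 0 < lam) {l : ℕ} (hl : l < q) {u v : ℝ}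
    (hu : u ∈ Ioo (a l) (a (l + 1))) (hv : v ∈ Ioo (a l) (a (l + 1))) :
    |u - v| ≤ lam * |T u - T v| := by
  obtain ⟨-, -, -, -, -, hC2, hder⟩ := hT
  obtain ⟨g, hg, hTg⟩ := hC2 l hl
  have hdiff : DifferentiableOn ℝ T (Ioo (a l) (a (l + 1))) :=
    (hg.differentiable two_ne_zero).differentiableOn.congr hTg
  calc |u - v| = lam * (1 / lam * |u - v|) := by field_simp
    _ ≤ lam * |T u - T v| := by
        gcongr
        exact ordConnected_Ioo.mul_abs_sub_le_abs_sub_of_le_abs_deriv hdiff (hder l hl) hu hv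

lemma coupledMap_sub (n : ℕ) (γ : ℝ) (T : ℝ → ℝ) (x : Fin n → ℝ) (i j : Fin n) :
    coupledMap n γ T x i - coupledMap n γ T x j = (1 - γ) * (T (x i) - T (x j)) := by
  simp only [coupledMap]; ring

lemma mem_syncSet_of_forall_mem_piece {n : ℕ} {T : ℝ → ℝ} {lam γ ν : ℝ} {q : ℕ} {a : ℕ → ℝ}
    (hT : PiecewiseC2Expanding T lam q a) (hlam : 0 < lam) (hγ : γ < 1) {l : ℕ} (hl : l < q)
    {x : Fin n → ℝ} (hx : x ∈ unitCube n) (hxl : ∀ i, x i ∈ Ioo (a l) (a (l + 1)))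
    (hTx : coupledMap n γ T x ∈ syncSet n ν) : x ∈ syncSet n (lam * ν / (1 - γ)) := by
  refine ⟨hx, fun i j hij => ?_⟩
  have hγ' : 0 < 1 - γ := sub_pos.2 hγ
  have hTij := hTx.2 i j hij
  rw [coupledMap_sub, abs_mul, abs_of_pos hγ'] at hTij
  calc |x i - x j| ≤ lam * |T (x i) - T (x j)| := hT.abs_sub_le hlam hl (hxl i) (hxl j)
    _ ≤ lam * (ν / (1 - γ)) := by
        gcongr
        rw [le_div_iff₀ hγ']
        linarith
    _ = lam * ν / (1 - γ) := (mul_div_assoc _ _ _).symm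

lemma exists_lt_and_le_succ {β : Type*} [LinearOrder β] {a : ℕ → β} {x : β} :
    ∀ {q : ℕ}, a 0 < x → x ≤ a q → ∃ l < q, a l < x ∧ x ≤ a (l + 1)
  | 0, h0, hq => absurd hq (not_le.2 h0)
  | q + 1, h0, hq => by
    by_cases hx : x ≤ a q
    · obtain ⟨l, hl, hlx⟩ := exists_lt_and_le_succ h0 hx
      exact ⟨l, hl.trans q.lt_succ_self, hlx⟩
    · exact ⟨q, q.lt_succ_self, not_le.1 hx, hq⟩

lemma syncSet_inter_preimage_subset {n : ℕ} {T : ℝ → ℝ} {lam γ ν : ℝ} {q : ℕ} {a : ℕ → ℝ}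
    (hT : PiecewiseC2Expanding T lam q a) (hlam : 0 < lam) (hγ : γ < 1) (hν : 0 ≤ ν)
    (i : Fin n) :
    syncSet n ν ∩ coupledMap n γ T ⁻¹' syncSet n ν ⊆ syncSet n (lam * ν / (1 - γ)) ∪
      ⋃ l ∈ Finset.range (q + 1), {x ∈ syncSet n ν | |x i - a l| ≤ ν} := by
  rintro x ⟨hx, hTx⟩
  by_cases hnear : ∃ l ∈ Finset.range (q + 1), |x i - a l| ≤ ν
  · obtain ⟨l, hl, hxl⟩ := hnear
    exact Or.inr (mem_biUnion hl ⟨hx, hxl⟩)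
  simp only [Finset.mem_range, not_exists, not_and, not_le, Nat.lt_succ_iff] at hnear
  have ha0 : a 0 = 0 := hT.2.1
  have haq : a q = 1 := hT.2.2.1
  have hxi := hx.1 i
  have h0 : a 0 < x i := by
    have := hnear 0 (Nat.zero_le q)
    rw [ha0, sub_zero, abs_of_nonneg hxi.1] at this
    rw [ha0]; linarith
  obtain ⟨l, hl, hlx, hxl⟩ := exists_lt_and_le_succ h0 (haq ▸ hxi.2)
  have hlo := hnear l hl.le
  have hhi := hnear (l + 1) hl
  rw [abs_of_pos (sub_pos.2 hlx)] at hlo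
  rw [abs_of_nonpos (sub_nonpos.2 hxl)] at hhi
  refine Or.inl (mem_syncSet_of_forall_mem_piece hT hlam hγ hl hx.1 (fun j => ?_) hTx)
  have := abs_le.1 (abs_sub_le_of_mem_syncSet hx hν j i)
  constructor <;> linarith

lemma volume_syncSet_inter_preimage_le (m : ℕ) {T : ℝ → ℝ} {lam γ ν : ℝ} {q : ℕ} {a : ℕ → ℝ}
    (hT : PiecewiseC2Expanding T lam q a) (hlam : 0 < lam) (hγ : γ < 1) (hν : 0 ≤ ν) :
    volume (syncSet (m + 1) ν ∩ coupledMap (m + 1) γ T ⁻¹' syncSet (m + 1) ν) ≤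
      ENNReal.ofReal ((m + 1) * (lam * ν / (1 - γ)) ^ m + (q + 1) * (2 * ν) ^ (m + 1)) := by
  have hγ' : 0 < 1 - γ := sub_pos.2 hγ
  calc volume (syncSet (m + 1) ν ∩ coupledMap (m + 1) γ T ⁻¹' syncSet (m + 1) ν)
      ≤ volume (syncSet (m + 1) (lam * ν / (1 - γ))) +
          ∑ l ∈ Finset.range (q + 1), volume {x ∈ syncSet (m + 1) ν | |x 0 - a l| ≤ ν} :=
        (measure_mono (syncSet_inter_preimage_subset hT hlam hγ hν 0)).trans
          ((measure_union_le _ _).trans (add_le_add le_rfl (measure_biUnion_finset_le _ _)))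
    _ ≤ ENNReal.ofReal ((m + 1) * (lam * ν / (1 - γ)) ^ m) +
          ∑ l ∈ Finset.range (q + 1), ENNReal.ofReal ((2 * ν) ^ (m + 1)) :=
        add_le_add (volume_syncSet_le m (by positivity))
          (Finset.sum_le_sum fun l _ => volume_syncSet_inter_abs_sub_le m 0 (a l) hν)
    _ = ENNReal.ofReal ((m + 1) * (lam * ν / (1 - γ)) ^ m + (q + 1) * (2 * ν) ^ (m + 1)) := by
        rw [Finset.sum_const, Finset.card_range, nsmul_eq_mul,
          ENNReal.ofReal_add (by positivity) (by positivity)]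
        congr 1
        rw [ENNReal.ofReal_mul (by positivity)]
        norm_cast

section Density

variable {β : Type*} [MeasurableSpace β] {ρ : Measure β} {f : β → ℝ} {c : ℝ}

lemma withDensity_ofReal_le_of_ae_le [SFinite ρ] (hf : ∀ᵐ x ∂ρ, f x ≤ c) (s : Set β) :
    ρ.withDensity (fun x => ENNReal.ofReal (f x)) s ≤ ENNReal.ofReal c * ρ s := by
  rw [withDensity_apply', ← setLIntegral_const]
  exact lintegral_mono_ae (ae_restrict_of_ae (hf.mono fun x hx => ENNReal.ofReal_le_ofReal hx))

lemma ofReal_mul_le_withDensity_ofReal_of_ae_le (hf : ∀ᵐ x ∂ρ, c ≤ f x) (s : Set β) :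
    ENNReal.ofReal c * ρ s ≤ ρ.withDensity (fun x => ENNReal.ofReal (f x)) s := by
  refine le_trans ?_ (withDensity_apply_le _ s)
  rw [← setLIntegral_const]
  exact lintegral_mono_ae (ae_restrict_of_ae (hf.mono fun x hx => ENNReal.ofReal_le_ofReal hx))

end Density

section DensityMeasure

variable {n : ℕ} {h : (Fin n → ℝ) → ℝ} {A : Set (Fin n → ℝ)}

lemma toReal_densityMeasure_le {M V : ℝ} (hM : ∀ᵐ x ∂volume.restrict (unitCube n), h x ≤ M)
    (hM0 : 0 ≤ M) (hV : 0 ≤ V) (hA : volume A ≤ ENNReal.ofReal V) :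
    (densityMeasure n h A).toReal ≤ M * V := by
  refine ENNReal.toReal_le_of_le_ofReal (by positivity) ?_
  calc densityMeasure n h A ≤ ENNReal.ofReal M * volume.restrict (unitCube n) A :=
        withDensity_ofReal_le_of_ae_le hM A
    _ ≤ ENNReal.ofReal M * ENNReal.ofReal V := by
        gcongr
        exact (Measure.restrict_apply_le _ _).trans hA
    _ = ENNReal.ofReal (M * V) := (ENNReal.ofReal_mul hM0).symm

lemma le_toReal_densityMeasure {M m V : ℝ} (hM : ∀ᵐ x ∂volume.restrict (unitCube n), h x ≤ M)
    (hm : ∀ᵐ x ∂volume.restrict (unitCube n), m ≤ h x) (hm0 : 0 ≤ m) (hAc : A ⊆ unitCube n)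
    (hA : ENNReal.ofReal V ≤ volume A) : m * V ≤ (densityMeasure n h A).toReal := by
  have hfin : densityMeasure n h A ≠ ⊤ := by
    refine ne_top_of_le_ne_top ?_ (withDensity_ofReal_le_of_ae_le hM A)
    refine ENNReal.mul_ne_top ENNReal.ofReal_ne_top (ne_top_of_le_ne_top ENNReal.one_ne_top ?_)
    calc volume.restrict (unitCube n) A ≤ volume (unitCube n) :=
          (Measure.restrict_apply_le _ _).trans (measure_mono hAc)
      _ = 1 := volume_unitCube n
  rw [← ENNReal.ofReal_le_iff_le_toReal hfin, ENNReal.ofReal_mul hm0]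
  calc ENNReal.ofReal m * ENNReal.ofReal V ≤ ENNReal.ofReal m * volume.restrict (unitCube n) A := by
        rw [Measure.restrict_eq_self _ hAc]; gcongr
    _ ≤ densityMeasure n h A := ofReal_mul_le_withDensity_ofReal_of_ae_le hm A

end DensityMeasure

lemma limsup_div_le_of_le_mul_pow_of_mul_pow_le {N D : ℝ → ℝ} {A B E : ℝ} {m : ℕ} (hE : 0 < E)
    (hN0 : ∀ ν ∈ Ioo (0 : ℝ) 1, 0 ≤ N ν) (hN : ∀ ν ∈ Ioo (0 : ℝ) 1, N ν ≤ (A + B * ν) * ν ^ m)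
    (hD : ∀ ν ∈ Ioo (0 : ℝ) 1, E * ν ^ m * (1 - ν) ≤ D ν) :
    limsup (fun ν => N ν / D ν) (𝓝[>] 0) ≤ A / E := by
  have hIoo : Ioo (0 : ℝ) 1 ∈ 𝓝[>] 0 := Ioo_mem_nhdsGT one_pos
  have hbound : ∀ᶠ ν in 𝓝[>] 0, N ν / D ν ≤ (A + B * ν) / (E * (1 - ν)) := by
    filter_upwards [hIoo] with ν hν
    have hpos : 0 < E * ν ^ m * (1 - ν) := by
      have := hν.1; have := sub_pos.2 hν.2; positivity
    calc N ν / D ν ≤ N ν / (E * ν ^ m * (1 - ν)) :=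
          div_le_div_of_nonneg_left (hN0 ν hν) hpos (hD ν hν)
      _ ≤ (A + B * ν) * ν ^ m / (E * ν ^ m * (1 - ν)) := by gcongr; exact hN ν hν
      _ = (A + B * ν) / (E * (1 - ν)) := by
          have := (pow_pos hν.1 m).ne'
          field_simp
  have hlim : Tendsto (fun ν => (A + B * ν) / (E * (1 - ν))) (𝓝[>] 0) (𝓝 (A / E)) := by
    have : ContinuousAt (fun ν => (A + B * ν) / (E * (1 - ν))) 0 :=
      ContinuousAt.div (by fun_prop) (by fun_prop) (by simpa using hE.ne')
    simpa using this.tendsto.mono_left nhdsWithin_le_nhds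
  have hcobdd : IsCoboundedUnder (· ≤ ·) (𝓝[>] 0) fun ν => N ν / D ν := by
    refine isCoboundedUnder_le_of_eventually_le _ (x := 0) ?_
    filter_upwards [hIoo] with ν hν
    have hpos : 0 < E * ν ^ m * (1 - ν) := by
      have := hν.1; have := sub_pos.2 hν.2; positivity
    exact div_nonneg (hN0 ν hν) (hpos.le.trans (hD ν hν))
  exact (limsup_le_limsup hbound hcobdd hlim.isBoundedUnder_le).trans_eq hlim.limsup_eq

theorem sync_ratio_limsup_le_general
    (n : ℕ) (hn : 2 ≤ n) (lam γ : ℝ)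
    (hlam : lam ∈ Ioo (0:ℝ) 1) (hγ : γ ∈ Ico (0:ℝ) 1)
    (T : ℝ → ℝ)
    (hpw : ∃ q a, PiecewiseC2Expanding T lam q a)
    (h : (Fin n → ℝ) → ℝ)
    (hnonneg : ∀ x ∈ unitCube n, 0 ≤ h x) (K : ℝ) (hbdd : ∀ x ∈ unitCube n, h x ≤ K)
    (hinf_pos : 0 < essInf h (volume.restrict (unitCube n))) :
    Filter.limsup
      (fun ν : ℝ =>
        ((densityMeasure n h)
            (syncSet n ν ∩ (coupledMap n γ T) ⁻¹' (syncSet n ν))).toReal /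
          ((densityMeasure n h) (syncSet n ν)).toReal)
      (nhdsWithin 0 (Ioi 0))
      ≤ lam ^ (n - 1) * essSup h (volume.restrict (unitCube n)) /
        ((1 - γ) ^ (n - 1) * essInf h (volume.restrict (unitCube n))) := by
  obtain ⟨q, a, hT⟩ := hpw
  obtain ⟨m, rfl⟩ : ∃ m, n = m + 1 := ⟨n - 1, by omega⟩
  set ρ := volume.restrict (unitCube (m + 1))
  have hρ : ∀ᵐ x ∂ρ, h x ∈ Icc 0 K := ae_restrict_of_forall_mem (measurableSet_unitCube _)
    fun x hx => ⟨hnonneg x hx, hbdd x hx⟩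
  have hsup : ∀ᵐ x ∂ρ, h x ≤ essSup h ρ := ae_le_essSup ⟨K, hρ.mono fun x hx => hx.2⟩
  have hinf : ∀ᵐ x ∂ρ, essInf h ρ ≤ h x := ae_essInf_le ⟨0, hρ.mono fun x hx => hx.1⟩
  have : NeZero ρ := ⟨by simp [ρ, volume_unitCube]⟩
  obtain ⟨x, hx⟩ := (hinf.and hsup).exists
  have hsup_pos : 0 < essSup h ρ := hinf_pos.trans_le (hx.1.trans hx.2)
  have hγ' : 0 < 1 - γ := sub_pos.2 hγ.2
  rw [Nat.add_sub_cancel]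
  refine (limsup_div_le_of_le_mul_pow_of_mul_pow_le (m := m) (E := essInf h ρ * (m + 1))
    (A := essSup h ρ * (m + 1) * (lam / (1 - γ)) ^ m) (B := essSup h ρ * (q + 1) * 2 ^ (m + 1))
    (by positivity) (fun _ _ => ENNReal.toReal_nonneg) ?_ ?_).trans_eq ?_
  · intro ν hν
    have := hlam.1
    have := hν.1
    exact (toReal_densityMeasure_le hsup hsup_pos.le (by positivity)
      (volume_syncSet_inter_preimage_le m hT hlam.1 hγ.2 hν.1.le)).trans_eq (by ring)
  · intro ν hν
    exact (by ring : _ = _).trans_le (le_toReal_densityMeasure hsup hinf hinf_pos.le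
      (fun _ hy => hy.1) (ofReal_le_volume_syncSet m hν.1.le))
  · field_simp
    rw [← mul_pow, div_mul_cancel₀ _ hγ'.ne']

/-- upper bound on the limsup, as `ν → 0⁺`, of the ratio
`μ(S_ν ∩ T̂⁻¹ S_ν) / μ(S_ν)` by `λ^{n-1}·‖h‖_∞ / ((1-γ)^{n-1}·h_inf)`. -/
theorem sync_ratio_limsup_le
    (n : ℕ) (hn : 2 ≤ n) (lam γ : ℝ)
    (hlam : lam ∈ Ioo (0:ℝ) 1) (hγ : γ ∈ Ico (0:ℝ) 1) (hlamγ : lam < 1 - γ)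
    (T : ℝ → ℝ) (hT : Set.MapsTo T (Icc 0 1) (Icc 0 1))
    (hpw : ∃ q a, PiecewiseC2Expanding T lam q a)
    (h : (Fin n → ℝ) → ℝ) (hmeas : Measurable h)
    (hnonneg : ∀ x ∈ unitCube n, 0 ≤ h x) (K : ℝ) (hbdd : ∀ x ∈ unitCube n, h x ≤ K)
    (hinf_pos : 0 < essInf h (volume.restrict (unitCube n))) :
    Filter.limsup
      (fun ν : ℝ =>
        ((densityMeasure n h)
            (syncSet n ν ∩ (coupledMap n γ T) ⁻¹' (syncSet n ν))).toReal /
          ((densityMeasure n h) (syncSet n ν)).toReal)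
      (nhdsWithin 0 (Ioi 0))
      ≤ lam ^ (n - 1) * essSup h (volume.restrict (unitCube n)) /
        ((1 - γ) ^ (n - 1) * essInf h (volume.restrict (unitCube n))) :=
  sync_ratio_limsup_le_general n hn lam γ hlam hγ T hpw h hnonneg K hbdd hinf_pos
end

section
/- Let n ≥ 3. There exists a constant C_n > 0, depending only on n, such that for all 0 < ε < ν ≤ 1, the Lebesgue measure of B_ε(D_ν) ∩ B_ε(S_ν) is at most C_n·ε·ν, where S_ν = {x ∈ [0,1]^n : |x_i − x_j| ≤ ν for all i ≠ j}, D_ν = [0,1]^n ∖ S_ν, and B_ε(A) = {x ∈ ℝ^n : dist(x, A) ≤ ε} is the closed ε-neighborhood with respect to the Euclidean distance. -/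
/-!
If `x` lies within `ε` of a point `z ∈ D_ν` and of a point `y ∈ S_ν`, choose `i ≠ j` with
`z i - z j > ν`. Comparing with `y` and `z` coordinatewise, `x i - x j` is within `4ε` of `ν`,
every other `x k - x j` is at most `5ν` in absolute value, and `x j ∈ [-2, 3]`. In the
volume-preserving shear coordinates `(x j, (x k - x j)_{k ≠ j})` this is a box of volume
`5 · 8ε · (10ν)^(n-2) ≤ 40 · 10^(n-2) · ε · ν`, since `n - 2 ≥ 1` and `ν ≤ 1`; there are fewer
than `n²` pairs `(i, j)`.
-/

open MeasureTheory Set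

/-- The unit cube `[0,1]^n` inside Euclidean `ℝ^n`. -/
def unitCubeE (n : ℕ) : Set (EuclideanSpace ℝ (Fin n)) := {x | ∀ i, x i ∈ Icc (0:ℝ) 1}

/-- The synchronization neighborhood `S_ν = {x ∈ [0,1]^n : |x_i − x_j| ≤ ν ∀ i ≠ j}`. -/
def syncSetE (n : ℕ) (ν : ℝ) : Set (EuclideanSpace ℝ (Fin n)) :=
  {x ∈ unitCubeE n | ∀ i j, i ≠ j → |x i - x j| ≤ ν}

section Shear

variable {ι : Type*}

theorem measurePreserving_sub_apply_smul [Fintype ι] [DecidableEq ι] {j : ι} {v : ι → ℝ}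
    (hv : v j = 0) :
    MeasurePreserving (fun x : ι → ℝ => x - x j • v) := by
  have hdet : LinearMap.det (Matrix.toLin' (1 - Matrix.vecMulVec v (Pi.single j 1))) = 1 := by
    rw [LinearMap.det_toLin', Matrix.vecMulVec_eq Unit, Matrix.det_one_sub_mul_comm,
      Matrix.det_unique, Matrix.sub_apply, Matrix.one_apply_eq,
      Matrix.replicateRow_mul_replicateCol_apply]
    simp [hv]
  have hmap :
      ⇑(Matrix.toLin' (1 - Matrix.vecMulVec v (Pi.single j 1))) = fun x => x - x j • v := by
    ext x k
    simp [Matrix.vecMulVec_mulVec, mul_comm]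
  refine ⟨by fun_prop, ?_⟩
  rw [← hmap, Real.map_linearMap_volume_pi_eq_smul_volume_pi (by rw [hdet]; exact one_ne_zero),
    hdet]
  simp

theorem Fintype.prod_ite_eq_ite_eq [Fintype ι] [DecidableEq ι] {M : Type*} [CommMonoid M]
    {i j : ι} (hij : i ≠ j) (a b c : M) :
    ∏ k, (if k = j then a else if k = i then b else c) = a * b * c ^ (Fintype.card ι - 2) := by
  have hi : i ∈ Finset.univ.erase j := Finset.mem_erase.mpr ⟨hij, Finset.mem_univ i⟩
  rw [← Finset.mul_prod_erase _ _ (Finset.mem_univ j), ← Finset.mul_prod_erase _ _ hi,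
    Finset.prod_congr rfl (g := fun _ => c), Finset.prod_const, Finset.card_erase_of_mem hi,
    Finset.card_erase_of_mem (Finset.mem_univ j), Finset.card_univ, if_pos rfl, if_neg hij,
    if_pos rfl, mul_assoc]
  · rfl
  intro k hk
  obtain ⟨hki, hkj⟩ := Finset.mem_erase.mp hk
  simp [hki, (Finset.mem_erase.mp hkj).1]

def shearedBox (j : ι) (lo hi : ι → ℝ) : Set (EuclideanSpace ℝ ι) :=
  {x | x j ∈ Icc (lo j) (hi j) ∧ ∀ k, k ≠ j → x k - x j ∈ Icc (lo k) (hi k)}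

theorem volume_shearedBox [Fintype ι] (j : ι) (lo hi : ι → ℝ) :
    volume (shearedBox j lo hi) = ∏ k, ENNReal.ofReal (hi k - lo k) := by
  classical
  have hbox : shearedBox j lo hi = WithLp.ofLp ⁻¹'
      ((fun x => x - x j • fun k => if k = j then (0 : ℝ) else 1) ⁻¹' Icc lo hi) := by
    ext x
    simp only [shearedBox, mem_preimage, mem_Icc, Pi.le_def, mem_ofPred_eq, Pi.sub_apply,
      Pi.smul_apply, smul_eq_mul, mul_ite, mul_zero, mul_one, ← forall_and]
    refine ⟨fun ⟨hj, hk⟩ k => ?_,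
      fun h => ⟨by simpa using h j, fun k hk => by simpa [hk] using h k⟩⟩
    by_cases hkj : k = j
    · simpa [hkj] using hj
    · simpa [hkj] using hk k hkj
  rw [hbox, (PiLp.volume_preserving_ofLp _).measure_preimage
      (measurableSet_Icc.preimage (by fun_prop)).nullMeasurableSet,
    (measurePreserving_sub_apply_smul (v := fun k => if k = j then 0 else 1)
      (if_pos rfl)).measure_preimage measurableSet_Icc.nullMeasurableSet, Real.volume_Icc_pi]

def pairSlab [DecidableEq ι] (i j : ι) (ε ν : ℝ) : Set (EuclideanSpace ℝ ι) :=
  shearedBox j (fun k => if k = j then -2 else if k = i then ν - 4 * ε else -5 * ν)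
    (fun k => if k = j then 3 else if k = i then ν + 4 * ε else 5 * ν)

theorem volume_pairSlab_le [Fintype ι] [DecidableEq ι] {i j : ι} (hij : i ≠ j)
    (hι : 3 ≤ Fintype.card ι) {ε ν : ℝ}
    (hε : 0 ≤ ε) (hν₀ : 0 ≤ ν) (hν : ν ≤ 1) :
    volume (pairSlab i j ε ν) ≤ ENNReal.ofReal (40 * 10 ^ (Fintype.card ι - 2) * ε * ν) := by
  have hlen : ∀ k, (if k = j then 3 else if k = i then ν + 4 * ε else 5 * ν) -
      (if k = j then -2 else if k = i then ν - 4 * ε else -5 * ν) =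
      if k = j then 5 else if k = i then 8 * ε else 10 * ν := by
    intro k
    split_ifs <;> ring
  rw [pairSlab, volume_shearedBox]
  simp_rw [hlen]
  rw [← ENNReal.ofReal_prod_of_nonneg (fun k _ => by split_ifs <;> positivity),
    Fintype.prod_ite_eq_ite_eq hij]
  apply ENNReal.ofReal_le_ofReal
  have hpow : ν ^ (Fintype.card ι - 2) ≤ ν := pow_le_of_le_one hν₀ hν (by omega)
  calc 5 * (8 * ε) * (10 * ν) ^ (Fintype.card ι - 2)
      = 40 * 10 ^ (Fintype.card ι - 2) * ε * ν ^ (Fintype.card ι - 2) := by ring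
    _ ≤ 40 * 10 ^ (Fintype.card ι - 2) * ε * ν := by gcongr

end Shear

theorem exists_lt_sub_of_mem_diff_syncSetE {n : ℕ} {ν : ℝ} {z : EuclideanSpace ℝ (Fin n)}
    (hz : z ∈ unitCubeE n \ syncSetE n ν) : ∃ i j, i ≠ j ∧ ν < z i - z j := by
  by_contra! h
  exact hz.2 ⟨hz.1, fun i j hij => abs_le.2 ⟨by linarith [h j i hij.symm], h i j hij⟩⟩

theorem mem_pairSlab_of_dist_lt {n : ℕ} {ε ν : ℝ} (hεν : ε ≤ ν) (hν : ν ≤ 1)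
    {x y z : EuclideanSpace ℝ (Fin n)} {i j : Fin n} (hij : i ≠ j) (hy : y ∈ syncSetE n ν)
    (hz : ν < z i - z j) (hxy : dist x y < 2 * ε) (hxz : dist x z < 2 * ε) :
    x ∈ pairSlab i j ε ν := by
  have hxy' : ∀ k, |x k - y k| < 2 * ε := fun k =>
    (Real.dist_eq _ _ ▸ PiLp.dist_apply_le x y k).trans_lt hxy
  have hxz' : ∀ k, |x k - z k| < 2 * ε := fun k =>
    (Real.dist_eq _ _ ▸ PiLp.dist_apply_le x z k).trans_lt hxz
  have hyj := hy.1 j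
  have hxyj := abs_lt.1 (hxy' j)
  refine ⟨?_, fun k hkj => ?_⟩
  · simp only [↓reduceIte, mem_Icc]
    constructor <;> linarith [hyj.1, hyj.2]
  · have hyk := abs_le.1 (hy.2 k j hkj)
    have hxyk := abs_lt.1 (hxy' k)
    by_cases hki : k = i
    · subst hki
      have hxzk := abs_lt.1 (hxz' k)
      have hxzj := abs_lt.1 (hxz' j)
      simp only [if_neg hkj, ↓reduceIte, mem_Icc]
      constructor <;> linarith
    · simp only [if_neg hkj, if_neg hki, mem_Icc]
      constructor <;> linarith

theorem cthickening_diff_syncSetE_inter_subset {n : ℕ} {ε ν : ℝ} (hε : 0 < ε) (hεν : ε ≤ ν)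
    (hν : ν ≤ 1) :
    Metric.cthickening ε (unitCubeE n \ syncSetE n ν) ∩ Metric.cthickening ε (syncSetE n ν) ⊆
      ⋃ p ∈ (Finset.univ : Finset (Fin n)).offDiag, pairSlab p.1 p.2 ε ν := by
  have hsub : ∀ A : Set (EuclideanSpace ℝ (Fin n)),
      Metric.cthickening ε A ⊆ Metric.thickening (2 * ε) A :=
    Metric.cthickening_subset_thickening' (by positivity) (by linarith)
  rintro x ⟨hxD, hxS⟩
  obtain ⟨z, hzD, hxz⟩ := Metric.mem_thickening_iff.1 (hsub _ hxD)
  obtain ⟨y, hyS, hxy⟩ := Metric.mem_thickening_iff.1 (hsub _ hxS)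
  obtain ⟨i, j, hij, hz⟩ := exists_lt_sub_of_mem_diff_syncSetE hzD
  exact mem_iUnion₂.2 ⟨(i, j), by simpa using hij,
    mem_pairSlab_of_dist_lt hεν hν hij hyS hz hxy hxz⟩

/-- for `n ≥ 3` there is a constant `C_n > 0` such that for all
`0 < ε < ν ≤ 1`, `Leb(B_ε(D_ν) ∩ B_ε(S_ν)) ≤ C_n·ε·ν`, where `D_ν = [0,1]^n ∖ S_ν`
and `B_ε(·)` is the closed `ε`-neighborhood for the Euclidean distance. -/
theorem measure_thickening_inter_le (n : ℕ) (hn : 3 ≤ n) :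
    ∃ C : ℝ, 0 < C ∧ ∀ ε ν : ℝ, 0 < ε → ε < ν → ν ≤ 1 →
      volume (Metric.cthickening ε (unitCubeE n \ syncSetE n ν) ∩
          Metric.cthickening ε (syncSetE n ν)) ≤
        ENNReal.ofReal (C * ε * ν) := by
  refine ⟨n ^ 2 * (40 * 10 ^ (n - 2)), by positivity, fun ε ν hε hεν hν => ?_⟩
  have hν₀ : 0 < ν := hε.trans hεν
  set pairs := (Finset.univ : Finset (Fin n)).offDiag
  have hcard : (pairs.card : ℝ) ≤ n ^ 2 := by
    have := Finset.card_le_univ pairs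
    simp only [Fintype.card_prod, Fintype.card_fin] at this
    exact_mod_cast this.trans_eq (sq n).symm
  calc _ ≤ volume (⋃ p ∈ pairs, pairSlab p.1 p.2 ε ν) :=
        measure_mono (cthickening_diff_syncSetE_inter_subset hε hεν.le hν)
    _ ≤ ∑ p ∈ pairs, volume (pairSlab p.1 p.2 ε ν) := measure_biUnion_finset_le _ _
    _ ≤ ∑ _p ∈ pairs, ENNReal.ofReal (40 * 10 ^ (n - 2) * ε * ν) :=
        Finset.sum_le_sum fun p hp => by
          simpa using volume_pairSlab_le (Finset.mem_offDiag.1 hp).2.2 (by simpa using hn) hε.le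
            hν₀.le hν
    _ = ENNReal.ofReal (pairs.card * (40 * 10 ^ (n - 2) * ε * ν)) := by
        rw [Finset.sum_const, nsmul_eq_mul, ← ENNReal.ofReal_natCast,
          ← ENNReal.ofReal_mul (Nat.cast_nonneg _)]
    _ ≤ ENNReal.ofReal (n ^ 2 * (40 * 10 ^ (n - 2)) * ε * ν) := ENNReal.ofReal_le_ofReal <|
        (mul_le_mul_of_nonneg_right hcard (by positivity)).trans_eq (by ring)
end
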